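/- arXiv:1803.04283 — 9 statements merged into one kernel-verified Lean document; each statement's English description precedes it below -/
import Mathlib

section
/- Along the 1-rarefaction wave curve, where v(ρ) satisfies v'(ρ) = −√(Anρ^{n−1} + αB/ρ^{α+1})/ρ, the eigenvalue λ₁(ρ, v(ρ)) = v(ρ) − √(Anρ^{n−1} + αB/ρ^{α+1}) is strictly decreasing in ρ: dλ₁/dρ = −(An(n+1)ρ^{n−1} + α(1−α)B ρ^{−(α+1)}) / (2ρ√(Anρ^{n−1} + αBρ^{−(α+1)})) < 0 for ρ > 0, A, B > 0, 1 ≤ n ≤ 3, 0 < α ≤ 1. -/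
lemma alg_aux (A B n α ρ s P Q : ℝ) (hρ : ρ ≠ 0) (hs : s ≠ 0)
    (e3 : s * s = A * n * P + α * B * Q) :
    -(s / ρ) - (A * n * ((n - 1) * (P / ρ)) + α * B * (-(α + 1) * (Q / ρ))) / (2 * s)
      = -((A * n * (n + 1) * P + α * (1 - α) * B * Q) / (2 * ρ * s)) := by
  field_simp
  linear_combination (-2) * e3


/-- Along the 1-rarefaction curve, where `v` satisfies
`v'(ρ) = −√(A n ρ^{n−1} + αB ρ^{−(α+1)})/ρ`, the eigenvalue
`λ₁(ρ) = v(ρ) − √(A n ρ^{n−1} + αB ρ^{−(α+1)})` is strictly decreasing in `ρ`: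
its derivative equals
`−(A n (n+1) ρ^{n−1} + α(1−α)B ρ^{−(α+1)}) / (2ρ √(A n ρ^{n−1} + αB ρ^{−(α+1)})) < 0`. -/
theorem stmt_2 (A B n α : ℝ) (hA : 0 < A) (hB : 0 < B)
    (hn1 : 1 ≤ n) (hn3 : n ≤ 3) (hα0 : 0 < α) (hα1 : α ≤ 1)
    (v : ℝ → ℝ)
    (hv : ∀ ρ : ℝ, 0 < ρ → HasDerivAt v
      (-(Real.sqrt (A * n * ρ ^ (n - 1) + α * B * ρ ^ (-(α + 1))) / ρ)) ρ) :
    ∀ ρ : ℝ, 0 < ρ →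
      HasDerivAt (fun ρ => v ρ - Real.sqrt (A * n * ρ ^ (n - 1) + α * B * ρ ^ (-(α + 1))))
        (-((A * n * (n + 1) * ρ ^ (n - 1) + α * (1 - α) * B * ρ ^ (-(α + 1))) /
          (2 * ρ * Real.sqrt (A * n * ρ ^ (n - 1) + α * B * ρ ^ (-(α + 1)))))) ρ ∧
      -((A * n * (n + 1) * ρ ^ (n - 1) + α * (1 - α) * B * ρ ^ (-(α + 1))) /
          (2 * ρ * Real.sqrt (A * n * ρ ^ (n - 1) + α * B * ρ ^ (-(α + 1))))) < 0 := by
  intro ρ hρ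
  have hρ0 : ρ ≠ 0 := hρ.ne'
  have hn0 : (0:ℝ) < n := lt_of_lt_of_le one_pos hn1
  have h1 : 0 < A * n * ρ ^ (n - 1) :=
    mul_pos (mul_pos hA hn0) (Real.rpow_pos_of_pos hρ _)
  have h2 : 0 < α * B * ρ ^ (-(α + 1)) :=
    mul_pos (mul_pos hα0 hB) (Real.rpow_pos_of_pos hρ _)
  have hg0 : 0 < A * n * ρ ^ (n - 1) + α * B * ρ ^ (-(α + 1)) := by linarith
  set g : ℝ := A * n * ρ ^ (n - 1) + α * B * ρ ^ (-(α + 1)) with hgdef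
  have hs : 0 < Real.sqrt g := Real.sqrt_pos.mpr hg0
  -- derivative of g
  have hd1 : HasDerivAt (fun x : ℝ => x ^ (n - 1)) ((n - 1) * ρ ^ (n - 1 - 1)) ρ :=
    Real.hasDerivAt_rpow_const (Or.inl hρ0)
  have hd2 : HasDerivAt (fun x : ℝ => x ^ (-(α + 1))) ((-(α + 1)) * ρ ^ (-(α + 1) - 1)) ρ :=
    Real.hasDerivAt_rpow_const (Or.inl hρ0)
  have hg' : HasDerivAt (fun x : ℝ => A * n * x ^ (n - 1) + α * B * x ^ (-(α + 1)))
      (A * n * ((n - 1) * ρ ^ (n - 1 - 1)) + α * B * ((-(α + 1)) * ρ ^ (-(α + 1) - 1))) ρ :=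
    (hd1.const_mul (A * n)).add (hd2.const_mul (α * B))
  have hsqrt : HasDerivAt (fun x : ℝ => Real.sqrt (A * n * x ^ (n - 1) + α * B * x ^ (-(α + 1))))
      ((A * n * ((n - 1) * ρ ^ (n - 1 - 1)) + α * B * ((-(α + 1)) * ρ ^ (-(α + 1) - 1))) /
        (2 * Real.sqrt g)) ρ :=
    hg'.sqrt hg0.ne'
  have hder := (hv ρ hρ).sub hsqrt
  have e1 : ρ ^ (n - 1 - 1) = ρ ^ (n - 1) / ρ := by
    rw [Real.rpow_sub hρ, Real.rpow_one]
  have e2 : ρ ^ (-(α + 1) - 1) = ρ ^ (-(α + 1)) / ρ := by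
    rw [Real.rpow_sub hρ, Real.rpow_one]
  have e3 : Real.sqrt g * Real.sqrt g = g := Real.mul_self_sqrt hg0.le
  have key : -(Real.sqrt g / ρ) -
      (A * n * ((n - 1) * ρ ^ (n - 1 - 1)) + α * B * ((-(α + 1)) * ρ ^ (-(α + 1) - 1))) /
        (2 * Real.sqrt g)
      = -((A * n * (n + 1) * ρ ^ (n - 1) + α * (1 - α) * B * ρ ^ (-(α + 1))) /
          (2 * ρ * Real.sqrt g)) := by
    rw [e1, e2]
    exact alg_aux A B n α ρ (Real.sqrt g) (ρ ^ (n - 1)) (ρ ^ (-(α + 1))) hρ0 hs.ne'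
      (by rw [e3, hgdef])
  constructor
  · exact key ▸ hder
  · have hN : 0 < A * n * (n + 1) * ρ ^ (n - 1) + α * (1 - α) * B * ρ ^ (-(α + 1)) := by
      have p1 : 0 < A * n * (n + 1) * ρ ^ (n - 1) :=
        mul_pos (mul_pos (mul_pos hA hn0) (by linarith)) (Real.rpow_pos_of_pos hρ _)
      have p2 : 0 ≤ α * (1 - α) * B * ρ ^ (-(α + 1)) :=
        mul_nonneg (mul_nonneg (mul_nonneg hα0.le (by linarith)) hB.le)
          (Real.rpow_pos_of_pos hρ _).le
      linarith
    have hD : 0 < 2 * ρ * Real.sqrt g := by positivity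
    exact neg_lt_zero.mpr (div_pos hN hD)
end

section
/- For the 1-shock curve of the extended Chaplygin gas, defined for ρ > ρ₋ by (v − v₋)² = ((ρ − ρ₋)/(ρρ₋))(A(ρ^n − ρ₋^n) − B(ρ^{−α} − ρ₋^{−α})) with v < v₋, v is strictly decreasing in ρ: differentiating gives 2(v − v₋)v'(ρ) = (1/ρ²)(A(ρ^n − ρ₋^n) − B(ρ^{−α} − ρ₋^{−α})) + ((ρ − ρ₋)/(ρρ₋))(Anρ^{n−1} + αBρ^{−(α+1)}) > 0, hence v'(ρ) < 0. -/
/-- On the 1-shock curve through left state `(ρL, vL)`, defined for `ρ > ρL` by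
`(v − vL)² = ((ρ−ρL)/(ρρL))(A(ρ^n − ρL^n) − B(ρ^{−α} − ρL^{−α}))` with `v < vL`,
`v` is strictly decreasing in `ρ`: differentiating gives
`2(v−vL)v'(ρ) = (1/ρ²)(A(ρ^n−ρL^n) − B(ρ^{−α}−ρL^{−α})) +
((ρ−ρL)/(ρρL))(A n ρ^{n−1} + αB ρ^{−(α+1)}) > 0`, hence `v'(ρ) < 0`. -/
theorem stmt_5 (A B n α ρL vL : ℝ) (hA : 0 < A) (hB : 0 < B)
    (hn1 : 1 ≤ n) (hα0 : 0 < α) (hα1 : α ≤ 1) (hρL : 0 < ρL)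
    (v v' : ℝ → ℝ)
    (hcurve : ∀ ρ : ℝ, ρL < ρ →
      (v ρ - vL) ^ (2 : ℕ) = ((ρ - ρL) / (ρ * ρL)) *
        (A * (ρ ^ n - ρL ^ n) - B * (ρ ^ (-α) - ρL ^ (-α))))
    (hlt : ∀ ρ : ℝ, ρL < ρ → v ρ < vL)
    (hderiv : ∀ ρ : ℝ, ρL < ρ → HasDerivAt v (v' ρ) ρ) :
    ∀ ρ : ℝ, ρL < ρ →
      2 * (v ρ - vL) * v' ρ =
        (1 / ρ ^ (2 : ℕ)) * (A * (ρ ^ n - ρL ^ n) - B * (ρ ^ (-α) - ρL ^ (-α))) +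
        ((ρ - ρL) / (ρ * ρL)) * (A * n * ρ ^ (n - 1) + α * B * ρ ^ (-(α + 1))) ∧
      0 < (1 / ρ ^ (2 : ℕ)) * (A * (ρ ^ n - ρL ^ n) - B * (ρ ^ (-α) - ρL ^ (-α))) +
        ((ρ - ρL) / (ρ * ρL)) * (A * n * ρ ^ (n - 1) + α * B * ρ ^ (-(α + 1))) ∧
      v' ρ < 0 := by
  intro ρ hρ
  have hρ0 : 0 < ρ := hρL.trans hρ
  set h : ℝ → ℝ := fun x => A * (x ^ n - ρL ^ n) - B * (x ^ (-α) - ρL ^ (-α)) with hh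
  have hd1 : HasDerivAt (fun x : ℝ => x ^ n) (n * ρ ^ (n - 1)) ρ :=
    Real.hasDerivAt_rpow_const (Or.inr hn1)
  have hd2 : HasDerivAt (fun x : ℝ => x ^ (-α)) (-α * ρ ^ (-α - 1)) ρ :=
    Real.hasDerivAt_rpow_const (Or.inl hρ0.ne')
  have hdh : HasDerivAt h (A * (n * ρ ^ (n - 1)) - B * (-α * ρ ^ (-α - 1))) ρ :=
    ((hd1.sub_const _).const_mul A).sub ((hd2.sub_const _).const_mul B)
  have hdg : HasDerivAt (fun x : ℝ => (x - ρL) / (x * ρL)) (1 / ρ ^ (2 : ℕ)) ρ := by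
    have hu : HasDerivAt (fun x : ℝ => x - ρL) 1 ρ := (hasDerivAt_id ρ).sub_const _
    have hw : HasDerivAt (fun x : ℝ => x * ρL) ρL ρ := by simpa using (hasDerivAt_id ρ).mul_const ρL
    have hne : ρ * ρL ≠ 0 := by positivity
    have := hu.fun_div hw hne
    refine this.congr_deriv ?_
    field_simp
    ring
  have hR : HasDerivAt (fun x => ((x - ρL) / (x * ρL)) * h x)
      ((1 / ρ ^ (2 : ℕ)) * h ρ +
        ((ρ - ρL) / (ρ * ρL)) * (A * (n * ρ ^ (n - 1)) - B * (-α * ρ ^ (-α - 1)))) ρ :=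
    hdg.mul hdh
  have hL : HasDerivAt (fun x => (v x - vL) ^ (2 : ℕ)) (2 * (v ρ - vL) * v' ρ) ρ := by
    have := ((hderiv ρ hρ).sub_const vL).fun_pow 2
    refine this.congr_deriv ?_
    ring
  have heq : (fun x => (v x - vL) ^ (2 : ℕ)) =ᶠ[nhds ρ]
      fun x => ((x - ρL) / (x * ρL)) * h x := by
    filter_upwards [isOpen_Ioi.mem_nhds hρ] with x hx
    exact hcurve x hx
  have hL2 := hR.congr_of_eventuallyEq heq
  have hEq : 2 * (v ρ - vL) * v' ρ =
      (1 / ρ ^ (2 : ℕ)) * h ρ +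
        ((ρ - ρL) / (ρ * ρL)) * (A * (n * ρ ^ (n - 1)) - B * (-α * ρ ^ (-α - 1))) :=
    hL.unique hL2
  have hexp : ρ ^ (-α - 1) = ρ ^ (-(α + 1)) := by rw [neg_add, ← sub_eq_add_neg]
  have hEq' : 2 * (v ρ - vL) * v' ρ =
      (1 / ρ ^ (2 : ℕ)) * (A * (ρ ^ n - ρL ^ n) - B * (ρ ^ (-α) - ρL ^ (-α))) +
        ((ρ - ρL) / (ρ * ρL)) * (A * n * ρ ^ (n - 1) + α * B * ρ ^ (-(α + 1))) := by
    rw [hEq, hh, ← hexp]; ring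
  have hpow1 : ρL ^ n < ρ ^ n :=
    Real.rpow_lt_rpow hρL.le hρ (lt_of_lt_of_le one_pos hn1)
  have hpow2 : ρ ^ (-α) < ρL ^ (-α) :=
    Real.rpow_lt_rpow_of_neg hρL hρ (neg_neg_iff_pos.mpr hα0)
  have hhpos : 0 < A * (ρ ^ n - ρL ^ n) - B * (ρ ^ (-α) - ρL ^ (-α)) := by nlinarith
  have hpos : 0 < (1 / ρ ^ (2 : ℕ)) * (A * (ρ ^ n - ρL ^ n) - B * (ρ ^ (-α) - ρL ^ (-α))) +
        ((ρ - ρL) / (ρ * ρL)) * (A * n * ρ ^ (n - 1) + α * B * ρ ^ (-(α + 1))) := by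
    have h1 : (0:ℝ) < 1 / ρ ^ (2 : ℕ) := by positivity
    have h2 : (0:ℝ) < (ρ - ρL) / (ρ * ρL) := by
      apply div_pos (by linarith) (by positivity)
    have h3 : (0:ℝ) < A * n * ρ ^ (n - 1) + α * B * ρ ^ (-(α + 1)) := by
      have : (0:ℝ) < n := lt_of_lt_of_le one_pos hn1
      positivity
    positivity
  refine ⟨hEq', hpos, ?_⟩
  have hv : v ρ < vL := hlt ρ hρ
  nlinarith [hEq', hpos, hv]
end

section
/- Let u₋ > u₊ and ρ₋, ρ₊ > 0. Suppose for each pair (A,B) with A, B > 0 there exists ρ* > max(ρ₋, ρ₊) satisfying u₋ − u₊ = √(((ρ* − ρ₋)/(ρ*ρ₋))(A(ρ*^n − ρ₋^n) − B(ρ*^{−α} − ρ₋^{−α}))) + √(((ρ* − ρ₊)/(ρ*ρ₊))(A(ρ*^n − ρ₊^n) − B(ρ*^{−α} − ρ₊^{−α}))). Then ρ*^{A,B} → +∞ as (A,B) → (0,0). -/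
private lemma aux_sqrt_bound (n α δ ρ0 ρ M A B : ℝ) (hn : 0 ≤ n)
    (hρ0 : 0 < ρ0) (hρ : ρ0 < ρ) (hM : ρ ≤ M)
    (hA : 0 ≤ A) (hAδ : A ≤ δ) (hB : 0 ≤ B) (hBδ : B ≤ δ) :
    Real.sqrt (((ρ - ρ0) / (ρ * ρ0)) *
        (A * (ρ ^ n - ρ0 ^ n) - B * (ρ ^ (-α) - ρ0 ^ (-α))))
      ≤ Real.sqrt δ * Real.sqrt ((M ^ n + ρ0 ^ (-α)) / ρ0) := by
  have hρpos : 0 < ρ := hρ0.trans hρ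
  have hδ : 0 ≤ δ := hA.trans hAδ
  rw [← Real.sqrt_mul hδ]
  apply Real.sqrt_le_sqrt
  set f := (ρ - ρ0) / (ρ * ρ0) with hf
  set E := A * (ρ ^ n - ρ0 ^ n) - B * (ρ ^ (-α) - ρ0 ^ (-α)) with hE
  have hf0 : 0 ≤ f := div_nonneg (by linarith) (by positivity)
  have hf1 : f ≤ 1 / ρ0 := by
    rw [div_le_div_iff₀ (by positivity) hρ0]
    nlinarith
  have hMpos : 0 < M := hρpos.trans_le hM
  have hrn : ρ ^ n ≤ M ^ n := Real.rpow_le_rpow hρpos.le hM hn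
  have hρ0n : (0:ℝ) ≤ ρ0 ^ n := Real.rpow_nonneg hρ0.le n
  have hρa : (0:ℝ) ≤ ρ ^ (-α) := Real.rpow_nonneg hρpos.le _
  have hρ0a : (0:ℝ) ≤ ρ0 ^ (-α) := Real.rpow_nonneg hρ0.le _
  have hMn : (0:ℝ) ≤ M ^ n := Real.rpow_nonneg hMpos.le n
  have hEb : E ≤ δ * (M ^ n + ρ0 ^ (-α)) := by
    have h1 : A * (ρ ^ n - ρ0 ^ n) ≤ δ * M ^ n := by nlinarith
    have h2 : -(B * (ρ ^ (-α) - ρ0 ^ (-α))) ≤ δ * ρ0 ^ (-α) := by nlinarith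
    rw [hE]; linarith
  have hEmax : 0 ≤ δ * (M ^ n + ρ0 ^ (-α)) := by positivity
  calc f * E ≤ f * (δ * (M ^ n + ρ0 ^ (-α))) := mul_le_mul_of_nonneg_left hEb hf0
    _ ≤ (1 / ρ0) * (δ * (M ^ n + ρ0 ^ (-α))) := mul_le_mul_of_nonneg_right hf1 hEmax
    _ = δ * ((M ^ n + ρ0 ^ (-α)) / ρ0) := by ring

/-- Let `uL > uR` and `ρL, ρR > 0`. If for each `A, B > 0` the intermediate
density `ρstar A B > max ρL ρR` satisfies the two-shock matching equation
`uL − uR = √(((ρ*−ρL)/(ρ*ρL))(A(ρ*^n−ρL^n) − B(ρ*^{−α}−ρL^{−α})))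
 + √(((ρ*−ρR)/(ρ*ρR))(A(ρ*^n−ρR^n) − B(ρ*^{−α}−ρR^{−α})))`,
then `ρstar A B → +∞` as `(A,B) → (0,0)`. -/
theorem stmt_7 (n α ρL ρR uL uR : ℝ)
    (hn1 : 1 ≤ n) (hn3 : n ≤ 3) (hα0 : 0 < α) (hα1 : α ≤ 1)
    (hρL : 0 < ρL) (hρR : 0 < ρR) (hu : uR < uL)
    (ρstar : ℝ → ℝ → ℝ)
    (hbig : ∀ A B : ℝ, 0 < A → 0 < B → max ρL ρR < ρstar A B)
    (heq : ∀ A B : ℝ, 0 < A → 0 < B →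
      uL - uR =
        Real.sqrt (((ρstar A B - ρL) / (ρstar A B * ρL)) *
          (A * ((ρstar A B) ^ n - ρL ^ n) - B * ((ρstar A B) ^ (-α) - ρL ^ (-α)))) +
        Real.sqrt (((ρstar A B - ρR) / (ρstar A B * ρR)) *
          (A * ((ρstar A B) ^ n - ρR ^ n) - B * ((ρstar A B) ^ (-α) - ρR ^ (-α))))) :
    ∀ M : ℝ, ∃ δ > 0, ∀ A B : ℝ, 0 < A → A < δ → 0 < B → B < δ →
      M < ρstar A B := by
  intro M
  set M' := max M (max ρL ρR) with hM'
  have hM'pos : 0 < M' := lt_of_lt_of_le (lt_max_iff.mpr (Or.inl hρL))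
    (le_max_right _ _)
  set K := Real.sqrt ((M' ^ n + ρL ^ (-α)) / ρL) +
           Real.sqrt ((M' ^ n + ρR ^ (-α)) / ρR) with hK
  have hKpos : 0 < K := by
    have h1 : 0 < Real.sqrt ((M' ^ n + ρL ^ (-α)) / ρL) := by
      apply Real.sqrt_pos.mpr; positivity
    have h2 : 0 ≤ Real.sqrt ((M' ^ n + ρR ^ (-α)) / ρR) := Real.sqrt_nonneg _
    rw [hK]; linarith
  have hdpos : 0 < uL - uR := by linarith
  refine ⟨((uL - uR) / (2 * K)) ^ 2, by positivity, ?_⟩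
  intro A B hA hAδ hB hBδ
  by_contra hcon
  push_neg at hcon
  have hbig' := hbig A B hA hB
  have hρLlt : ρL < ρstar A B := lt_of_le_of_lt (le_max_left _ _) hbig'
  have hρRlt : ρR < ρstar A B := lt_of_le_of_lt (le_max_right _ _) hbig'
  have hρM' : ρstar A B ≤ M' := hcon.trans (le_max_left _ _)
  have hs1 := aux_sqrt_bound n α (((uL - uR) / (2 * K)) ^ 2) ρL (ρstar A B) M' A B
    (by linarith) hρL hρLlt hρM' hA.le hAδ.le hB.le hBδ.le
  have hs2 := aux_sqrt_bound n α (((uL - uR) / (2 * K)) ^ 2) ρR (ρstar A B) M' A B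
    (by linarith) hρR hρRlt hρM' hA.le hAδ.le hB.le hBδ.le
  have hsq : Real.sqrt (((uL - uR) / (2 * K)) ^ 2) = (uL - uR) / (2 * K) :=
    Real.sqrt_sq (by positivity)
  rw [hsq] at hs1 hs2
  have hkey := heq A B hA hB
  have hsum : uL - uR ≤ (uL - uR) / (2 * K) * K := by
    rw [hK]
    calc uL - uR = _ + _ := hkey
      _ ≤ (uL - uR) / (2 * K) * Real.sqrt ((M' ^ n + ρL ^ (-α)) / ρL) +
          (uL - uR) / (2 * K) * Real.sqrt ((M' ^ n + ρR ^ (-α)) / ρR) :=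
            add_le_add hs1 hs2
      _ = (uL - uR) / (2 * K) *
          (Real.sqrt ((M' ^ n + ρL ^ (-α)) / ρL) +
           Real.sqrt ((M' ^ n + ρR ^ (-α)) / ρR)) := by ring
  have hhalf : (uL - uR) / (2 * K) * K = (uL - uR) / 2 := by
    field_simp
  linarith
end

section
/- Under the hypotheses of the previous statement (u₋ > u₊, ρ*^{A,B} → +∞ as A, B → 0, and ρ* satisfies the two-shock matching equation), the limit lim_{A,B→0} A(ρ*^{A,B})^n = (ρ₋ρ₊/(√ρ₋ + √ρ₊)²)(u₋ − u₊)². -/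
private lemma aux_sqle (d c S : ℝ) (hd : 0 ≤ d) (hS : 0 ≤ S) (hc : 0 ≤ c)
    (h : d ≤ Real.sqrt c * S) : d ^ 2 ≤ c * S ^ 2 := by
  have h1 := mul_self_le_mul_self hd h
  have h2 := Real.mul_self_sqrt hc
  nlinarith [Real.sqrt_nonneg c]

private lemma aux_sqge (d c S : ℝ) (hS : 0 ≤ S) (hc : 0 ≤ c)
    (h : Real.sqrt c * S ≤ d) : c * S ^ 2 ≤ d ^ 2 := by
  have h0 : 0 ≤ Real.sqrt c * S := mul_nonneg (Real.sqrt_nonneg c) hS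
  have h1 := mul_self_le_mul_self h0 h
  have h2 := Real.mul_self_sqrt hc
  nlinarith

private lemma aux_final (ε L M0 ρ T AK : ℝ) (hε : 0 < ε) (hL : 0 < L) (hM0 : 0 < M0)
    (hρ : 2 * M0 + 4 * L * M0 / ε < ρ) (hAK : AK < ε / 2) (hAKT : AK ≤ T)
    (hkey : (ρ - M0) * (T - AK) ≤ L * ρ) : T - L < ε := by
  have hLM : 0 < 4 * L * M0 / ε := by positivity
  have hρ2 : 2 * M0 < ρ := by linarith
  have hρε : 2 * M0 * ε + 4 * L * M0 < ρ * ε := by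
    have h := mul_lt_mul_of_pos_right hρ hε
    have hid : (2 * M0 + 4 * L * M0 / ε) * ε = 2 * M0 * ε + 4 * L * M0 := by
      field_simp
    linarith
  by_contra hcon
  push_neg at hcon
  have h1 : T - AK ≥ L + ε / 2 := by linarith
  have h2 : (ρ - M0) * (L + ε / 2) ≤ (ρ - M0) * (T - AK) :=
    mul_le_mul_of_nonneg_left h1 (by linarith)
  nlinarith

private lemma aux_key (n α A B ρ ρ0 T K m M0 : ℝ)
    (hα0 : 0 < α) (hn0 : 0 ≤ n) (hA : 0 < A) (hB : 0 < B)
    (h0 : 0 < ρ0) (hlt : ρ0 < ρ) (hma : ρ0 ^ (-α) ≤ m) (hka : ρ0 ^ n ≤ K)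
    (hT : T = A * ρ ^ n) (hM0 : M0 < ρ) (h0M : ρ0 ≤ M0) (hmpos : 0 < m) :
    Real.sqrt (((ρ - ρ0) / (ρ * ρ0)) *
        (A * (ρ ^ n - ρ0 ^ n) - B * (ρ ^ (-α) - ρ0 ^ (-α)))) ≤
      Real.sqrt (T + B * m) * (1 / Real.sqrt ρ0) ∧
    (A * K ≤ T →
      Real.sqrt (((ρ - M0) / ρ) * (T - A * K)) * (1 / Real.sqrt ρ0) ≤
        Real.sqrt (((ρ - ρ0) / (ρ * ρ0)) *
          (A * (ρ ^ n - ρ0 ^ n) - B * (ρ ^ (-α) - ρ0 ^ (-α))))) := by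
  have hρpos : 0 < ρ := lt_trans h0 hlt
  have hρ0n : 0 < ρ0 ^ n := Real.rpow_pos_of_pos h0 n
  have hρnn : 0 < ρ ^ n := Real.rpow_pos_of_pos hρpos n
  have hρa : 0 < ρ ^ (-α) := Real.rpow_pos_of_pos hρpos _
  have hρ0a : 0 < ρ0 ^ (-α) := Real.rpow_pos_of_pos h0 _
  have hTpos : 0 < T := by rw [hT]; positivity
  have hTBm : (0:ℝ) ≤ T + B * m := by positivity
  have hnle : ρ0 ^ n ≤ ρ ^ n := Real.rpow_le_rpow h0.le hlt.le hn0
  have hale : ρ ^ (-α) ≤ ρ0 ^ (-α) := by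
    rw [Real.rpow_neg hρpos.le, Real.rpow_neg h0.le]
    exact inv_anti₀ (Real.rpow_pos_of_pos h0 α)
      (Real.rpow_le_rpow h0.le hlt.le hα0.le)
  have hEnn : 0 ≤ A * (ρ ^ n - ρ0 ^ n) - B * (ρ ^ (-α) - ρ0 ^ (-α)) := by
    nlinarith [mul_nonneg hA.le (sub_nonneg.mpr hnle),
      mul_nonneg hB.le (sub_nonneg.mpr hale)]
  have hs0 : (0:ℝ) < Real.sqrt ρ0 := Real.sqrt_pos.mpr h0
  constructor
  · have harg : ((ρ - ρ0) / (ρ * ρ0)) *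
        (A * (ρ ^ n - ρ0 ^ n) - B * (ρ ^ (-α) - ρ0 ^ (-α))) ≤ (T + B * m) / ρ0 := by
      have h1 : (ρ - ρ0) / (ρ * ρ0) ≤ 1 / ρ0 := by
        rw [div_le_div_iff₀ (by positivity) h0]
        nlinarith
      have h2 : A * (ρ ^ n - ρ0 ^ n) - B * (ρ ^ (-α) - ρ0 ^ (-α)) ≤ T + B * m := by
        have ha1 : 0 ≤ A * ρ0 ^ n := by positivity
        have hb1 : 0 ≤ B * ρ ^ (-α) := by positivity
        have hb2 : B * ρ0 ^ (-α) ≤ B * m := mul_le_mul_of_nonneg_left hma hB.le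
        nlinarith
      calc ((ρ - ρ0) / (ρ * ρ0)) *
            (A * (ρ ^ n - ρ0 ^ n) - B * (ρ ^ (-α) - ρ0 ^ (-α)))
          ≤ (1 / ρ0) * (T + B * m) := mul_le_mul h1 h2 hEnn (by positivity)
        _ = (T + B * m) / ρ0 := by ring
    calc Real.sqrt (((ρ - ρ0) / (ρ * ρ0)) *
            (A * (ρ ^ n - ρ0 ^ n) - B * (ρ ^ (-α) - ρ0 ^ (-α))))
        ≤ Real.sqrt ((T + B * m) / ρ0) := Real.sqrt_le_sqrt harg
      _ = Real.sqrt (T + B * m) * (1 / Real.sqrt ρ0) := by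
          rw [Real.sqrt_div hTBm]; ring
  · intro hTAK
    have hsub : (0:ℝ) ≤ T - A * K := by linarith
    have hWnn : (0:ℝ) ≤ (ρ - M0) / ρ := div_nonneg (by linarith) hρpos.le
    have hx : (ρ - M0) / (ρ * ρ0) ≤ (ρ - ρ0) / (ρ * ρ0) :=
      (div_le_div_iff_of_pos_right (by positivity)).mpr (by linarith)
    have hy : T - A * K ≤ A * (ρ ^ n - ρ0 ^ n) - B * (ρ ^ (-α) - ρ0 ^ (-α)) := by
      have h1 : A * ρ0 ^ n ≤ A * K := mul_le_mul_of_nonneg_left hka hA.le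
      have h2 : 0 ≤ B * (ρ0 ^ (-α) - ρ ^ (-α)) := mul_nonneg hB.le (sub_nonneg.mpr hale)
      rw [hT]
      nlinarith
    have hWT : 0 ≤ ((ρ - M0) / ρ) * (T - A * K) := mul_nonneg hWnn hsub
    have heqq : (((ρ - M0) / ρ) * (T - A * K)) / ρ0 =
        ((ρ - M0) / (ρ * ρ0)) * (T - A * K) := by
      field_simp
    have harg : (((ρ - M0) / ρ) * (T - A * K)) / ρ0 ≤
        ((ρ - ρ0) / (ρ * ρ0)) * (A * (ρ ^ n - ρ0 ^ n) - B * (ρ ^ (-α) - ρ0 ^ (-α))) := by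
      rw [heqq]
      exact mul_le_mul hx hy hsub (div_nonneg (by linarith) (by positivity))
    calc Real.sqrt (((ρ - M0) / ρ) * (T - A * K)) * (1 / Real.sqrt ρ0)
        = Real.sqrt ((((ρ - M0) / ρ) * (T - A * K)) / ρ0) := by
          rw [Real.sqrt_div hWT]; ring
      _ ≤ _ := Real.sqrt_le_sqrt harg


set_option maxHeartbeats 1000000 in

/-- Under the two-shock hypotheses (`uL > uR`, `ρstar A B → +∞` as `A,B → 0`,
and `ρstar` satisfies the two-shock matching equation), one has
`lim_{A,B→0} A (ρstar A B)^n = (ρL ρR/(√ρL + √ρR)²)(uL − uR)²`. -/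
theorem stmt_8 (n α ρL ρR uL uR : ℝ)
    (hn1 : 1 ≤ n) (hn3 : n ≤ 3) (hα0 : 0 < α) (hα1 : α ≤ 1)
    (hρL : 0 < ρL) (hρR : 0 < ρR) (hu : uR < uL)
    (ρstar : ℝ → ℝ → ℝ)
    (hbig : ∀ A B : ℝ, 0 < A → 0 < B → max ρL ρR < ρstar A B)
    (heq : ∀ A B : ℝ, 0 < A → 0 < B →
      uL - uR =
        Real.sqrt (((ρstar A B - ρL) / (ρstar A B * ρL)) *
          (A * ((ρstar A B) ^ n - ρL ^ n) - B * ((ρstar A B) ^ (-α) - ρL ^ (-α)))) +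
        Real.sqrt (((ρstar A B - ρR) / (ρstar A B * ρR)) *
          (A * ((ρstar A B) ^ n - ρR ^ n) - B * ((ρstar A B) ^ (-α) - ρR ^ (-α)))))
    (hdiv : ∀ M : ℝ, ∃ δ > 0, ∀ A B : ℝ, 0 < A → A < δ → 0 < B → B < δ →
      M < ρstar A B) :
    ∀ ε > 0, ∃ δ > 0, ∀ A B : ℝ, 0 < A → A < δ → 0 < B → B < δ →
      |A * (ρstar A B) ^ n -
        (ρL * ρR / (Real.sqrt ρL + Real.sqrt ρR) ^ (2 : ℕ)) * (uL - uR) ^ (2 : ℕ)| < ε := by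
  intro ε hε
  have hd : (0:ℝ) < uL - uR := sub_pos.mpr hu
  have hsL : (0:ℝ) < Real.sqrt ρL := Real.sqrt_pos.mpr hρL
  have hsR : (0:ℝ) < Real.sqrt ρR := Real.sqrt_pos.mpr hρR
  have hsqL : Real.sqrt ρL * Real.sqrt ρL = ρL := Real.mul_self_sqrt hρL.le
  have hsqR : Real.sqrt ρR * Real.sqrt ρR = ρR := Real.mul_self_sqrt hρR.le
  obtain ⟨L, hL_def⟩ : ∃ x : ℝ,
      x = (ρL * ρR / (Real.sqrt ρL + Real.sqrt ρR) ^ (2 : ℕ)) * (uL - uR) ^ (2 : ℕ) :=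
    ⟨_, rfl⟩
  have hLpos : 0 < L := by rw [hL_def]; positivity
  obtain ⟨S, hS_def⟩ : ∃ x : ℝ, x = 1 / Real.sqrt ρL + 1 / Real.sqrt ρR := ⟨_, rfl⟩
  have hSpos : 0 < S := by rw [hS_def]; positivity
  have hs2 : S * (Real.sqrt ρL * Real.sqrt ρR) = Real.sqrt ρL + Real.sqrt ρR := by
    rw [hS_def]; field_simp; ring
  have hS2 : S ^ 2 * (ρL * ρR) = (Real.sqrt ρL + Real.sqrt ρR) ^ 2 := by
    linear_combination (-(S ^ 2 * ρR)) * hsqL +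
      (-(S ^ 2 * (Real.sqrt ρL * Real.sqrt ρL))) * hsqR +
      (S * (Real.sqrt ρL * Real.sqrt ρR) + (Real.sqrt ρL + Real.sqrt ρR)) * hs2
  have hLS : L * S ^ 2 = (uL - uR) ^ 2 := by
    rw [hL_def]
    have hne : (Real.sqrt ρL + Real.sqrt ρR) ^ (2:ℕ) ≠ 0 := by positivity
    field_simp
    linear_combination hS2
  obtain ⟨K, hK_def⟩ : ∃ x : ℝ, x = ρL ^ n + ρR ^ n := ⟨_, rfl⟩
  have hKpos : 0 < K := by rw [hK_def]; positivity
  have hkL : ρL ^ n ≤ K := by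
    rw [hK_def]; nlinarith [Real.rpow_pos_of_pos hρR n]
  have hkR : ρR ^ n ≤ K := by
    rw [hK_def]; nlinarith [Real.rpow_pos_of_pos hρL n]
  obtain ⟨m, hm_def⟩ : ∃ x : ℝ, x = ρL ^ (-α) + ρR ^ (-α) := ⟨_, rfl⟩
  have hmpos : 0 < m := by rw [hm_def]; positivity
  have hmL : ρL ^ (-α) ≤ m := by
    rw [hm_def]; nlinarith [Real.rpow_pos_of_pos hρR (-α)]
  have hmR : ρR ^ (-α) ≤ m := by
    rw [hm_def]; nlinarith [Real.rpow_pos_of_pos hρL (-α)]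
  obtain ⟨M0, hM0_def⟩ : ∃ x : ℝ, x = max ρL ρR := ⟨_, rfl⟩
  have hM0pos : 0 < M0 := by rw [hM0_def]; exact lt_max_of_lt_left hρL
  have hM0L : ρL ≤ M0 := by rw [hM0_def]; exact le_max_left _ _
  have hM0R : ρR ≤ M0 := by rw [hM0_def]; exact le_max_right _ _
  obtain ⟨M1, hM1_def⟩ : ∃ x : ℝ, x = 2 * M0 + 4 * L * M0 / ε := ⟨_, rfl⟩
  obtain ⟨δ1, hδ1pos, hδ1⟩ := hdiv M1
  refine ⟨min δ1 (min (ε / (2 * K)) (ε / (2 * m))), by positivity, ?_⟩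
  intro A B hA hAδ hB hBδ
  have hAδ1 : A < δ1 := lt_of_lt_of_le hAδ (min_le_left _ _)
  have hBδ1 : B < δ1 := lt_of_lt_of_le hBδ (min_le_left _ _)
  have hAK : A * K < ε / 2 := by
    have h1 : A < ε / (2 * K) :=
      lt_of_lt_of_le hAδ (le_trans (min_le_right _ _) (min_le_left _ _))
    have h2 := (lt_div_iff₀ (by positivity : (0:ℝ) < 2 * K)).mp h1
    have h3 : A * (2 * K) = 2 * (A * K) := by ring
    linarith
  have hBm : B * m < ε / 2 := by
    have h1 : B < ε / (2 * m) :=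
      lt_of_lt_of_le hBδ (le_trans (min_le_right _ _) (min_le_right _ _))
    have h2 := (lt_div_iff₀ (by positivity : (0:ℝ) < 2 * m)).mp h1
    have h3 : B * (2 * m) = 2 * (B * m) := by ring
    linarith
  have hEQ := heq A B hA hB
  obtain ⟨ρ, hρ_def⟩ : ∃ x : ℝ, x = ρstar A B := ⟨_, rfl⟩
  rw [← hρ_def] at hEQ
  have hρM0 : M0 < ρ := by rw [hM0_def, hρ_def]; exact hbig A B hA hB
  have hρM1 : M1 < ρ := by rw [hρ_def]; exact hδ1 A B hA hAδ1 hB hBδ1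
  rw [hM1_def] at hρM1
  clear hδ1 hAδ1 hBδ1 hAδ hBδ heq hdiv hbig
  have hρpos : 0 < ρ := lt_trans hM0pos hρM0
  have hρLlt : ρL < ρ := lt_of_le_of_lt hM0L hρM0
  have hρRlt : ρR < ρ := lt_of_le_of_lt hM0R hρM0
  obtain ⟨T, hT_def⟩ : ∃ x : ℝ, x = A * ρ ^ n := ⟨_, rfl⟩
  have hρn : 0 < ρ ^ n := Real.rpow_pos_of_pos hρpos n
  have hTpos : 0 < T := by rw [hT_def]; positivity
  have hTBm : (0:ℝ) ≤ T + B * m := by positivity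
  obtain ⟨hUL, hLL⟩ := aux_key n α A B ρ ρL T K m M0 hα0 (by linarith) hA hB
    hρL hρLlt hmL hkL hT_def hρM0 hM0L hmpos
  obtain ⟨hUR, hLR⟩ := aux_key n α A B ρ ρR T K m M0 hα0 (by linarith) hA hB
    hρR hρRlt hmR hkR hT_def hρM0 hM0R hmpos
  have hup : uL - uR ≤ Real.sqrt (T + B * m) * S := by
    rw [hEQ]
    calc _ ≤ Real.sqrt (T + B * m) * (1 / Real.sqrt ρL) +
            Real.sqrt (T + B * m) * (1 / Real.sqrt ρR) := add_le_add hUL hUR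
      _ = Real.sqrt (T + B * m) * S := by rw [hS_def]; ring
  have hd2 : (uL - uR) ^ 2 ≤ (T + B * m) * S ^ 2 :=
    aux_sqle _ _ _ hd.le hSpos.le hTBm hup
  have hLleT : L ≤ T + B * m := by
    have h1 : L * S ^ 2 ≤ (T + B * m) * S ^ 2 := by rw [hLS]; exact hd2
    exact le_of_mul_le_mul_right h1 (by positivity)
  have hTup : T - L < ε := by
    rcases le_or_gt T (A * K) with hc | hc
    · linarith
    · have hTAK : A * K ≤ T := hc.le
      have hlow : Real.sqrt (((ρ - M0) / ρ) * (T - A * K)) * S ≤ uL - uR := by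
        rw [hEQ]
        calc Real.sqrt (((ρ - M0) / ρ) * (T - A * K)) * S
            = Real.sqrt (((ρ - M0) / ρ) * (T - A * K)) * (1 / Real.sqrt ρL) +
              Real.sqrt (((ρ - M0) / ρ) * (T - A * K)) * (1 / Real.sqrt ρR) := by
              rw [hS_def]; ring
          _ ≤ _ := add_le_add (hLL hTAK) (hLR hTAK)
      have hWT : 0 ≤ ((ρ - M0) / ρ) * (T - A * K) :=
        mul_nonneg (div_nonneg (by linarith) hρpos.le) (by linarith)
      have hd2' : (((ρ - M0) / ρ) * (T - A * K)) * S ^ 2 ≤ (uL - uR) ^ 2 :=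
        aux_sqge (uL - uR) _ S hSpos.le hWT hlow
      have hkey : ((ρ - M0) / ρ) * (T - A * K) ≤ L := by
        have h1 : (((ρ - M0) / ρ) * (T - A * K)) * S ^ 2 ≤ L * S ^ 2 := by
          rw [hLS]; exact hd2'
        exact le_of_mul_le_mul_right h1 (by positivity)
      have hkey2 : (ρ - M0) * (T - A * K) ≤ L * ρ := by
        have h2 := mul_le_mul_of_nonneg_right hkey hρpos.le
        have hid : (((ρ - M0) / ρ) * (T - A * K)) * ρ = (ρ - M0) * (T - A * K) := by
          field_simp
        rw [hid] at h2
        exact h2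
      exact aux_final ε L M0 ρ T (A * K) hε hLpos hM0pos hρM1 hAK hTAK hkey2
  have habs : |T - L| < ε := abs_lt.mpr ⟨by linarith, by linarith⟩
  have hTg : A * (ρstar A B) ^ n = T := by rw [hT_def, hρ_def]
  rw [hTg, ← hL_def]
  exact habs
end

section
/- Assume u₋ > u₊ and that as A, B → 0, ρ*^{A,B} → +∞ and A(ρ*^{A,B})^n → ρ₋ρ₊(u₋−u₊)²/(√ρ₋+√ρ₊)². If v* is defined by v* = u₋ − √(((ρ*−ρ₋)/(ρ*ρ₋))(A(ρ*^n−ρ₋^n) − B(ρ*^{−α}−ρ₋^{−α}))), then lim_{A,B→0} v*^{A,B} = σ₀ := (√ρ₋ u₋ + √ρ₊ u₊)/(√ρ₋ + √ρ₊). -/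
/-- Assume `uL > uR`, and as `A, B → 0`: `ρstar A B → +∞` and
`A (ρstar A B)^n → ρL ρR (uL−uR)²/(√ρL+√ρR)²`. If
`vstar A B = uL − √(((ρ*−ρL)/(ρ*ρL))(A(ρ*^n−ρL^n) − B(ρ*^{−α}−ρL^{−α})))`,
then `vstar A B → σ₀ := (√ρL uL + √ρR uR)/(√ρL + √ρR)` as `A, B → 0`. -/
theorem stmt_9 (n α ρL ρR uL uR : ℝ)
    (hn1 : 1 ≤ n) (hn3 : n ≤ 3) (hα0 : 0 < α) (hα1 : α ≤ 1)
    (hρL : 0 < ρL) (hρR : 0 < ρR) (hu : uR < uL)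
    (ρstar vstar : ℝ → ℝ → ℝ)
    (hbig : ∀ A B : ℝ, 0 < A → 0 < B → max ρL ρR < ρstar A B)
    (hdiv : ∀ M : ℝ, ∃ δ > 0, ∀ A B : ℝ, 0 < A → A < δ → 0 < B → B < δ →
      M < ρstar A B)
    (hlim : ∀ ε > 0, ∃ δ > 0, ∀ A B : ℝ, 0 < A → A < δ → 0 < B → B < δ →
      |A * (ρstar A B) ^ n -
        (ρL * ρR / (Real.sqrt ρL + Real.sqrt ρR) ^ (2 : ℕ)) * (uL - uR) ^ (2 : ℕ)| < ε)
    (hv : ∀ A B : ℝ, 0 < A → 0 < B →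
      vstar A B = uL -
        Real.sqrt (((ρstar A B - ρL) / (ρstar A B * ρL)) *
          (A * ((ρstar A B) ^ n - ρL ^ n) - B * ((ρstar A B) ^ (-α) - ρL ^ (-α))))) :
    ∀ ε > 0, ∃ δ > 0, ∀ A B : ℝ, 0 < A → A < δ → 0 < B → B < δ →
      |vstar A B -
        (Real.sqrt ρL * uL + Real.sqrt ρR * uR) / (Real.sqrt ρL + Real.sqrt ρR)| < ε := by
  classical
  set s : ℝ := Real.sqrt ρL + Real.sqrt ρR with hs
  have hsL : 0 < Real.sqrt ρL := Real.sqrt_pos.2 hρL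
  have hsR : 0 < Real.sqrt ρR := Real.sqrt_pos.2 hρR
  have hspos : 0 < s := by positivity
  set L : ℝ := ρL * ρR / s ^ (2 : ℕ) * (uL - uR) ^ (2 : ℕ) with hL
  set σ : ℝ := (Real.sqrt ρL * uL + Real.sqrt ρR * uR) / s with hσdef
  set F : Filter (ℝ × ℝ) :=
    (nhdsWithin 0 (Set.Ioi 0)) ×ˢ (nhdsWithin 0 (Set.Ioi 0)) with hF
  set ρ : ℝ × ℝ → ℝ := fun p => ρstar p.1 p.2 with hρdef
  -- basic membership lemma
  have memS : ∀ δ : ℝ, 0 < δ →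
      {p : ℝ × ℝ | (0 < p.1 ∧ p.1 < δ) ∧ (0 < p.2 ∧ p.2 < δ)} ∈ F := by
    intro δ hδ
    have h : Set.Ioo (0 : ℝ) δ ∈ nhdsWithin 0 (Set.Ioi 0) :=
      Ioo_mem_nhdsGT_of_mem ⟨le_refl 0, hδ⟩
    exact Filter.mem_of_superset (Filter.prod_mem_prod h h)
      (fun p hp => ⟨hp.1, hp.2⟩)
  have hpos : ∀ᶠ p : ℝ × ℝ in F, 0 < p.1 ∧ 0 < p.2 := by
    filter_upwards [memS 1 one_pos] with p hp
    exact ⟨hp.1.1, hp.2.1⟩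
  -- ρ tends to atTop
  have hρtop : Filter.Tendsto ρ F Filter.atTop := by
    rw [Filter.tendsto_atTop]
    intro M
    obtain ⟨δ, hδ, h⟩ := hdiv M
    filter_upwards [memS δ hδ] with p hp
    exact (h p.1 p.2 hp.1.1 hp.1.2 hp.2.1 hp.2.2).le
  -- A ρ^n tends to L
  have hAρ : Filter.Tendsto (fun p : ℝ × ℝ => p.1 * (ρ p) ^ n) F (nhds L) := by
    rw [Metric.tendsto_nhds]
    intro ε hε
    obtain ⟨δ, hδ, h⟩ := hlim ε hε
    filter_upwards [memS δ hδ] with p hp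
    rw [Real.dist_eq]
    exact h p.1 p.2 hp.1.1 hp.1.2 hp.2.1 hp.2.2
  have hA0 : Filter.Tendsto (fun p : ℝ × ℝ => p.1) F (nhds 0) :=
    Filter.tendsto_fst.mono_right nhdsWithin_le_nhds
  have hB0 : Filter.Tendsto (fun p : ℝ × ℝ => p.2) F (nhds 0) :=
    Filter.tendsto_snd.mono_right nhdsWithin_le_nhds
  have hinv : Filter.Tendsto (fun p : ℝ × ℝ => (ρ p)⁻¹) F (nhds 0) :=
    hρtop.inv_tendsto_atTop
  -- first factor
  have hfac : Filter.Tendsto (fun p : ℝ × ℝ => (ρ p - ρL) / (ρ p * ρL)) F (nhds ρL⁻¹) := by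
    have hcg : ∀ᶠ p : ℝ × ℝ in F, ρL⁻¹ - (ρ p)⁻¹ = (ρ p - ρL) / (ρ p * ρL) := by
      filter_upwards [hpos] with p hp
      have hρp : 0 < ρ p := lt_trans (lt_of_lt_of_le hρL (le_max_left _ _))
        (hbig p.1 p.2 hp.1 hp.2)
      rw [eq_div_iff (by positivity : (ρ p * ρL) ≠ 0), sub_mul]
      have h1 : ρL⁻¹ * (ρ p * ρL) = ρ p := by
        rw [mul_comm (ρ p) ρL, ← mul_assoc, inv_mul_cancel₀ hρL.ne', one_mul]
      have h2 : (ρ p)⁻¹ * (ρ p * ρL) = ρL := by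
        rw [← mul_assoc, inv_mul_cancel₀ hρp.ne', one_mul]
      rw [h1, h2]
    have := (tendsto_const_nhds (x := ρL⁻¹) (f := F)).sub hinv
    rw [sub_zero] at this
    exact this.congr' hcg
  -- ρ^(-α) → 0
  have hrn : Filter.Tendsto (fun p : ℝ × ℝ => (ρ p) ^ (-α)) F (nhds 0) :=
    (tendsto_rpow_neg_atTop hα0).comp hρtop
  -- inner factor
  have hinner : Filter.Tendsto (fun p : ℝ × ℝ =>
      p.1 * ((ρ p) ^ n - ρL ^ n) - p.2 * ((ρ p) ^ (-α) - ρL ^ (-α))) F (nhds L) := by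
    have h1 : Filter.Tendsto (fun p : ℝ × ℝ =>
        p.1 * (ρ p) ^ n - p.1 * ρL ^ n - p.2 * (ρ p) ^ (-α) + p.2 * ρL ^ (-α)) F
        (nhds (L - 0 * ρL ^ n - 0 * 0 + 0 * ρL ^ (-α))) :=
      ((hAρ.sub (hA0.mul tendsto_const_nhds)).sub (hB0.mul hrn)).add
        (hB0.mul tendsto_const_nhds)
    have h2 : (L - 0 * ρL ^ n - 0 * 0 + 0 * ρL ^ (-α)) = L := by ring
    rw [h2] at h1
    exact h1.congr (fun p => by ring)
  -- combined expression under sqrt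
  have hE : Filter.Tendsto (fun p : ℝ × ℝ =>
      ((ρ p - ρL) / (ρ p * ρL)) *
        (p.1 * ((ρ p) ^ n - ρL ^ n) - p.2 * ((ρ p) ^ (-α) - ρL ^ (-α)))) F
      (nhds (ρL⁻¹ * L)) := hfac.mul hinner
  have hsqrt := hE.sqrt
  -- value of the limit
  have key : ρL⁻¹ * L = (Real.sqrt ρR * (uL - uR) / s) ^ (2 : ℕ) := by
    rw [hL, div_pow, mul_pow, Real.sq_sqrt hρR.le]
    field_simp
  have hsqval : Real.sqrt (ρL⁻¹ * L) = Real.sqrt ρR * (uL - uR) / s := by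
    rw [key, Real.sqrt_sq (div_nonneg (mul_nonneg (Real.sqrt_nonneg _) (sub_pos.2 hu).le) hspos.le)]
  have hσval : uL - Real.sqrt (ρL⁻¹ * L) = σ := by
    rw [hsqval, hσdef, hs]
    field_simp
    ring
  -- v tends to σ
  have hvt : Filter.Tendsto (fun p : ℝ × ℝ => vstar p.1 p.2) F (nhds σ) := by
    have h1 : Filter.Tendsto (fun p : ℝ × ℝ =>
        uL - Real.sqrt (((ρ p - ρL) / (ρ p * ρL)) *
          (p.1 * ((ρ p) ^ n - ρL ^ n) - p.2 * ((ρ p) ^ (-α) - ρL ^ (-α))))) F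
        (nhds (uL - Real.sqrt (ρL⁻¹ * L))) :=
      tendsto_const_nhds.sub hsqrt
    rw [hσval] at h1
    refine h1.congr' ?_
    filter_upwards [hpos] with p hp
    exact (hv p.1 p.2 hp.1 hp.2).symm
  -- extract ε-δ
  intro ε hε
  have hev : ∀ᶠ p : ℝ × ℝ in F, |vstar p.1 p.2 - σ| < ε := by
    have := Metric.tendsto_nhds.1 hvt ε hε
    filter_upwards [this] with p hp
    rwa [Real.dist_eq] at hp
  rw [hF, Filter.eventually_prod_iff] at hev
  obtain ⟨pa, hpa, pb, hpb, himp⟩ := hev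
  obtain ⟨ua, hua, hsa⟩ := mem_nhdsGT_iff_exists_Ioo_subset.1 hpa
  obtain ⟨ub, hub, hsb⟩ := mem_nhdsGT_iff_exists_Ioo_subset.1 hpb
  refine ⟨min ua ub, lt_min hua hub, fun A B hA hAδ hB hBδ => ?_⟩
  have haA : pa A := hsa ⟨hA, lt_of_lt_of_le hAδ (min_le_left _ _)⟩
  have hbB : pb B := hsb ⟨hB, lt_of_lt_of_le hBδ (min_le_right _ _)⟩
  exact himp haA hbB
end

section
/- The functions x(t) = σ₀t + βt²/2, u_δ(t) = σ₀ + βt, w(t) = √(ρ₋ρ₊)(u₋−u₊)t solve the generalized Rankine–Hugoniot system dx/dt = u_δ(t), dw/dt = u_δ(t)(ρ₊ − ρ₋) − (ρ₊(u₊+βt) − ρ₋(u₋+βt)), d(w u_δ)/dt = u_δ(t)(ρ₊(u₊+βt) − ρ₋(u₋+βt)) − (ρ₊(u₊+βt)² − ρ₋(u₋+βt)²) + βw(t), with x(0) = 0, w(0) = 0, where σ₀ = (√ρ₋u₋ + √ρ₊u₊)/(√ρ₋+√ρ₊). -/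
/-- The functions `x(t) = σ₀ t + βt²/2`, `u_δ(t) = σ₀ + βt`,
`w(t) = √(ρL ρR)(uL − uR) t` with `σ₀ = (√ρL uL + √ρR uR)/(√ρL + √ρR)`
solve the generalized Rankine–Hugoniot system for the delta shock of the
transportation equations with Coulomb-like friction, with `x(0) = 0, w(0) = 0`. -/
theorem stmt_12 (ρL ρR uL uR β : ℝ) (hρL : 0 < ρL) (hρR : 0 < ρR) (hu : uR < uL)
    (σ₀ : ℝ)
    (hσ : σ₀ = (Real.sqrt ρL * uL + Real.sqrt ρR * uR) / (Real.sqrt ρL + Real.sqrt ρR))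
    (x uδ w : ℝ → ℝ)
    (hx : ∀ t, x t = σ₀ * t + β * t ^ 2 / 2)
    (huδ : ∀ t, uδ t = σ₀ + β * t)
    (hw : ∀ t, w t = Real.sqrt (ρL * ρR) * (uL - uR) * t) :
    x 0 = 0 ∧ w 0 = 0 ∧
    (∀ t : ℝ,
      HasDerivAt x (uδ t) t ∧
      HasDerivAt w (uδ t * (ρR - ρL) - (ρR * (uR + β * t) - ρL * (uL + β * t))) t ∧
      HasDerivAt (fun s => w s * uδ s)
        (uδ t * (ρR * (uR + β * t) - ρL * (uL + β * t)) -
          (ρR * (uR + β * t) ^ 2 - ρL * (uL + β * t) ^ 2) + β * w t) t) := by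
  have hxf : x = fun t => σ₀ * t + β * t ^ 2 / 2 := funext hx
  have huf : uδ = fun t => σ₀ + β * t := funext huδ
  have hwf : w = fun t => Real.sqrt (ρL * ρR) * (uL - uR) * t := funext hw
  subst hxf huf hwf
  set a := Real.sqrt ρL with ha
  set b := Real.sqrt ρR with hb
  have ha0 : 0 < a := Real.sqrt_pos.mpr hρL
  have hb0 : 0 < b := Real.sqrt_pos.mpr hρR
  have ha2 : a ^ 2 = ρL := Real.sq_sqrt hρL.le
  have hb2 : b ^ 2 = ρR := Real.sq_sqrt hρR.le
  have hab : Real.sqrt (ρL * ρR) = a * b := Real.sqrt_mul hρL.le ρR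
  have hab0 : a + b ≠ 0 := by positivity
  refine ⟨by ring, by ring, fun t => ?_⟩
  constructor
  · have h1 : HasDerivAt (fun s : ℝ => σ₀ * s + β * s ^ 2 / 2)
        (σ₀ * 1 + β * (↑2 * t ^ 1) / 2) t :=
      ((hasDerivAt_id t).const_mul σ₀).add (((hasDerivAt_pow 2 t).const_mul β).div_const 2)
    convert h1 using 1
    simp; ring
  have hwd : HasDerivAt (fun s : ℝ => Real.sqrt (ρL * ρR) * (uL - uR) * s)
      (Real.sqrt (ρL * ρR) * (uL - uR) * 1) t :=
    (hasDerivAt_id t).const_mul _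
  have hud : HasDerivAt (fun s : ℝ => σ₀ + β * s) (0 + β * 1) t :=
    (hasDerivAt_const t σ₀).add ((hasDerivAt_id t).const_mul β)
  constructor
  · convert hwd using 1
    rw [hab, ← ha2, ← hb2, hσ]
    field_simp
    ring
  · have := hwd.mul hud
    convert this using 1
    · rfl
    · rfl
    · rfl
    simp only [hab]
    simp only [hab, ← ha2, ← hb2, hσ]
    field_simp
    ring
end

section
/- Let u₋ < u₊, ρ₋, ρ₊ > 0, and suppose for each A, B > 0 there is ρ* ∈ (0, min(ρ₋, ρ₊)] with u₊ − u₋ = ∫_{ρ*}^{ρ₋} √(Ans^{n−1} + αBs^{−(α+1)})/s ds + ∫_{ρ*}^{ρ₊} √(Ans^{n−1} + αBs^{−(α+1)})/s ds. Then ρ*^{A,B} → 0 as (A,B) → (0,0). -/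
/-- Let `uL < uR`, `ρL, ρR > 0`, and suppose for each `A, B > 0` there is an
intermediate density `ρstar A B ∈ (0, min ρL ρR]` with
`uR − uL = ∫_{ρ*}^{ρL} √(A n s^{n−1} + αB s^{−(α+1)})/s ds
 + ∫_{ρ*}^{ρR} √(A n s^{n−1} + αB s^{−(α+1)})/s ds`.
Then `ρstar A B → 0` as `(A,B) → (0,0)` (formation of vacuum). -/
theorem stmt_14 (n α ρL ρR uL uR : ℝ)
    (hn1 : 1 ≤ n) (hn3 : n ≤ 3) (hα0 : 0 < α) (hα1 : α ≤ 1)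
    (hρL : 0 < ρL) (hρR : 0 < ρR) (hu : uL < uR)
    (ρstar : ℝ → ℝ → ℝ)
    (hpos : ∀ A B : ℝ, 0 < A → 0 < B →
      0 < ρstar A B ∧ ρstar A B ≤ min ρL ρR)
    (heq : ∀ A B : ℝ, 0 < A → 0 < B →
      uR - uL =
        (∫ s in (ρstar A B)..ρL,
          Real.sqrt (A * n * s ^ (n - 1) + α * B * s ^ (-(α + 1))) / s) +
        (∫ s in (ρstar A B)..ρR,
          Real.sqrt (A * n * s ^ (n - 1) + α * B * s ^ (-(α + 1))) / s)) :
    ∀ ε > 0, ∃ δ > 0, ∀ A B : ℝ, 0 < A → A < δ → 0 < B → B < δ →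
      ρstar A B < ε := by
  intro ε hε
  set c := uR - uL with hc
  have hc0 : 0 < c := by simp only [hc]; linarith
  set K : ℝ := max 1 (max ρL ρR) with hK
  have hK1 : (1 : ℝ) ≤ K := le_max_left _ _
  have hK0 : (0 : ℝ) < K := lt_of_lt_of_le one_pos hK1
  set K₁ : ℝ := K ^ (n - 1) with hK₁
  have hK₁0 : 0 < K₁ := Real.rpow_pos_of_pos hK0 _
  set K₂ : ℝ := ε ^ (-(α + 1)) with hK₂
  have hK₂0 : 0 < K₂ := Real.rpow_pos_of_pos hε _
  set S : ℝ := ρL + ρR with hS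
  have hS0 : 0 < S := by positivity
  set T : ℝ := (c * ε / S) ^ 2 with hT
  have hT0 : 0 < T := by positivity
  have hn0 : (0 : ℝ) < n := lt_of_lt_of_le one_pos hn1
  set D : ℝ := n * K₁ + α * K₂ + 1 with hD
  have hD0 : 0 < D := by positivity
  refine ⟨T / D, by positivity, ?_⟩
  intro A B hA hAδ hB hBδ
  by_contra hcon
  push_neg at hcon
  obtain ⟨hρs0, hρsle⟩ := hpos A B hA hB
  set ρs := ρstar A B with hρs
  -- the total coefficient inside the sqrt is < T
  have hTD : T / D * D = T := div_mul_cancel₀ T (ne_of_gt hD0)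
  have hin : A * n * K₁ + α * B * K₂ < T := by
    have h1 : A * (n * K₁) < (T / D) * (n * K₁) :=
      mul_lt_mul_of_pos_right hAδ (by positivity)
    have h2 : B * (α * K₂) < (T / D) * (α * K₂) :=
      mul_lt_mul_of_pos_right hBδ (by positivity)
    have h3 : 0 < T / D := by positivity
    nlinarith [h1, h2, h3]
  set Q : ℝ := Real.sqrt (A * n * K₁ + α * B * K₂) with hQ
  set C : ℝ := Q / ε with hCdef
  have hC0 : 0 ≤ C := by positivity
  have hQT : Q < c * ε / S := by
    have := Real.sqrt_lt_sqrt (by positivity) hin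
    rwa [hT, Real.sqrt_sq (by positivity)] at this
  have hCS : C * S < c := by
    have h' : Q * S < c * ε := (lt_div_iff₀ hS0).mp hQT
    rw [hCdef, div_mul_eq_mul_div, div_lt_iff₀ hε]
    linarith [h']
  -- key integral bound
  have key : ∀ b : ℝ, 0 < b → ρs ≤ b → b ≤ K →
      (∫ s in ρs..b,
        Real.sqrt (A * n * s ^ (n - 1) + α * B * s ^ (-(α + 1))) / s) ≤ C * b := by
    intro b hb hle hbK
    have hnorm : ‖∫ s in ρs..b,
        Real.sqrt (A * n * s ^ (n - 1) + α * B * s ^ (-(α + 1))) / s‖ ≤ C * |b - ρs| := by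
      apply intervalIntegral.norm_integral_le_of_norm_le_const
      intro x hx
      rw [Set.uIoc_of_le hle] at hx
      obtain ⟨hx1, hx2⟩ := hx
      have hx0 : 0 < x := hρs0.trans hx1
      have hxε : ε ≤ x := le_trans hcon hx1.le
      have hxK : x ≤ K := hx2.trans hbK
      rw [Real.norm_eq_abs, abs_of_nonneg (by positivity)]
      apply div_le_div₀ (Real.sqrt_nonneg _) ?_ hε hxε
      apply Real.sqrt_le_sqrt
      have e1 : x ^ (n - 1) ≤ K₁ := Real.rpow_le_rpow hx0.le hxK (by linarith)
      have e2 : x ^ (-(α + 1)) ≤ K₂ := by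
        rw [Real.rpow_neg hx0.le, hK₂, Real.rpow_neg hε.le]
        exact inv_anti₀ (Real.rpow_pos_of_pos hε _)
          (Real.rpow_le_rpow hε.le hxε (by linarith))
      have e1' : A * n * x ^ (n - 1) ≤ A * n * K₁ :=
        mul_le_mul_of_nonneg_left e1 (by positivity)
      have e2' : α * B * x ^ (-(α + 1)) ≤ α * B * K₂ :=
        mul_le_mul_of_nonneg_left e2 (by positivity)
      linarith
    calc (∫ s in ρs..b,
          Real.sqrt (A * n * s ^ (n - 1) + α * B * s ^ (-(α + 1))) / s)
        ≤ |∫ s in ρs..b,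
          Real.sqrt (A * n * s ^ (n - 1) + α * B * s ^ (-(α + 1))) / s| := le_abs_self _
      _ ≤ C * |b - ρs| := by rw [← Real.norm_eq_abs]; exact hnorm
      _ ≤ C * b := by
          apply mul_le_mul_of_nonneg_left _ hC0
          rw [abs_of_nonneg (by linarith)]
          linarith
  have hρLK : ρL ≤ K := le_trans (le_max_left ρL ρR) (le_max_right _ _)
  have hρRK : ρR ≤ K := le_trans (le_max_right ρL ρR) (le_max_right _ _)
  have I1 := key ρL hρL (le_trans hρsle (min_le_left _ _)) hρLK
  have I2 := key ρR hρR (le_trans hρsle (min_le_right _ _)) hρRK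
  have hEq := heq A B hA hB
  have hCS' : C * ρL + C * ρR < c := by
    have : C * S = C * ρL + C * ρR := by rw [hS]; ring
    linarith [hCS]
  rw [← hρs] at hEq
  linarith
end

section
/- Suppose u₋ − u₊ > √B ρ₊^{−(α+1)/2} + √B ρ₋^{−(α+1)/2} with B > 0 fixed, ρ₋, ρ₊ > 0, 0 < α ≤ 1, and for each A > 0 there is ρ*^A > max(ρ₋, ρ₊) satisfying u₋ − u₊ = √(((ρ*−ρ₋)/(ρ*ρ₋))(A(ρ*ⁿ−ρ₋ⁿ) − B(ρ*^{−α}−ρ₋^{−α}))) + √(((ρ*−ρ₊)/(ρ*ρ₊))(A(ρ*ⁿ−ρ₊ⁿ) − B(ρ*^{−α}−ρ₊^{−α}))). Then ρ*^A → +∞ as A → 0⁺. -/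
lemma sqrt_add_le' (x y : ℝ) (hx : 0 ≤ x) (hy : 0 ≤ y) :
    Real.sqrt (x + y) ≤ Real.sqrt x + Real.sqrt y := by
  have h1 := Real.sqrt_nonneg x
  have h2 := Real.sqrt_nonneg y
  have hx2 : Real.sqrt x ^ 2 = x := Real.sq_sqrt hx
  have hy2 : Real.sqrt y ^ 2 = y := Real.sq_sqrt hy
  have : x + y ≤ (Real.sqrt x + Real.sqrt y) ^ 2 := by nlinarith [mul_nonneg h1 h2]
  calc Real.sqrt (x + y) ≤ Real.sqrt ((Real.sqrt x + Real.sqrt y) ^ 2) :=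
        Real.sqrt_le_sqrt this
    _ = Real.sqrt x + Real.sqrt y := Real.sqrt_sq (by positivity)

lemma cbound' (α ρ K : ℝ) (hα : 0 < α) (hρ : 0 < ρ) (hρK : ρ < K) :
    Real.sqrt ((1/ρ - 1/K) * (ρ ^ (-α) - K ^ (-α))) < ρ ^ (-(α + 1) / 2) := by
  have hK : (0:ℝ) < K := hρ.trans hρK
  have hKα : K ^ (-α) < ρ ^ (-α) := by
    rw [Real.rpow_neg hK.le, Real.rpow_neg hρ.le]
    exact inv_strictAnti₀ (Real.rpow_pos_of_pos hρ α)
      (Real.rpow_lt_rpow hρ.le hρK hα)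
  have hf2 : 0 < ρ ^ (-α) - K ^ (-α) := by linarith
  have hprod : (1/ρ - 1/K) * (ρ ^ (-α) - K ^ (-α)) < ρ ^ (-(α + 1)) := by
    have h1 : 1/ρ - 1/K < 1/ρ := by
      have : 0 < 1/K := by positivity
      linarith
    have h2 : ρ ^ (-α) - K ^ (-α) ≤ ρ ^ (-α) := by
      have : 0 < K ^ (-α) := Real.rpow_pos_of_pos hK _
      linarith
    have := mul_lt_mul h1 h2 hf2 (by positivity : (0:ℝ) ≤ 1/ρ)
    have heq : 1/ρ * ρ ^ (-α) = ρ ^ (-(α + 1)) := by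
      rw [one_div, ← Real.rpow_neg_one ρ, ← Real.rpow_add hρ]
      ring_nf
    linarith [this, heq.symm.le, heq.le]
  have hrw : ρ ^ (-(α + 1) / 2) = Real.sqrt (ρ ^ (-(α + 1))) := by
    rw [Real.sqrt_eq_rpow, ← Real.rpow_mul hρ.le]
    congr 1
    ring
  rw [hrw]
  refine Real.sqrt_lt_sqrt ?_ hprod
  have h1K : 1/K ≤ 1/ρ := one_div_le_one_div_of_le hρ hρK.le
  exact mul_nonneg (by linarith) hf2.le

lemma term_bound' (A B α n ρ r K : ℝ) (hA : 0 < A) (hB : 0 < B) (hα : 0 < α)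
    (hn : 0 < n) (hρ : 0 < ρ) (hρr : ρ < r) (hrK : r < K) :
    Real.sqrt (((r - ρ) / (r * ρ)) * (A * (r ^ n - ρ ^ n) - B * (r ^ (-α) - ρ ^ (-α))))
      ≤ Real.sqrt (A * K ^ n / ρ) +
        Real.sqrt B * Real.sqrt ((1/ρ - 1/K) * (ρ ^ (-α) - K ^ (-α))) := by
  have hr : (0:ℝ) < r := hρ.trans hρr
  have hK : (0:ℝ) < K := hr.trans hrK
  -- basic facts
  have hfrac : (r - ρ) / (r * ρ) = 1/ρ - 1/r := by
    rw [div_sub_div _ _ (ne_of_gt hρ) (ne_of_gt hr)]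
    rw [mul_comm ρ r]
    congr 1
    ring
  have hfac0 : 0 ≤ 1/ρ - 1/r := by
    have : 1/r ≤ 1/ρ := one_div_le_one_div_of_le hρ hρr.le
    linarith
  have hfacK : 1/ρ - 1/r ≤ 1/ρ - 1/K := by
    have : 1/K ≤ 1/r := one_div_le_one_div_of_le hr hrK.le
    linarith
  have hrn : r ^ n ≤ K ^ n := Real.rpow_le_rpow hr.le hrK.le hn.le
  have hρn : ρ ^ n ≤ r ^ n := Real.rpow_le_rpow hρ.le hρr.le hn.le
  have hρn0 : 0 < ρ ^ n := Real.rpow_pos_of_pos hρ n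
  have hrα : r ^ (-α) ≤ ρ ^ (-α) := by
    rw [Real.rpow_neg hr.le, Real.rpow_neg hρ.le]
    exact inv_anti₀ (Real.rpow_pos_of_pos hρ α)
      (Real.rpow_le_rpow hρ.le hρr.le hα.le)
  have hKα : K ^ (-α) ≤ r ^ (-α) := by
    rw [Real.rpow_neg hK.le, Real.rpow_neg hr.le]
    exact inv_anti₀ (Real.rpow_pos_of_pos hr α)
      (Real.rpow_le_rpow hr.le hrK.le hα.le)
  -- inner bound
  have hinner : ((r - ρ) / (r * ρ)) * (A * (r ^ n - ρ ^ n) - B * (r ^ (-α) - ρ ^ (-α)))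
      ≤ A * K ^ n / ρ + B * ((1/ρ - 1/K) * (ρ ^ (-α) - K ^ (-α))) := by
    rw [hfrac]
    have h1r : 0 < 1/r := by positivity
    have e1 : (1/ρ - 1/r) * (A * (r ^ n - ρ ^ n)) ≤ (1/ρ) * (A * K ^ n) := by
      apply mul_le_mul (by linarith) (by nlinarith) (by nlinarith) (by positivity)
    have e2 : (1/ρ - 1/r) * (B * (ρ ^ (-α) - r ^ (-α)))
        ≤ (1/ρ - 1/K) * (B * (ρ ^ (-α) - K ^ (-α))) := by
      apply mul_le_mul hfacK (by nlinarith) (by nlinarith) (by linarith)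
    have : (1/ρ - 1/r) * (A * (r ^ n - ρ ^ n) - B * (r ^ (-α) - ρ ^ (-α)))
        = (1/ρ - 1/r) * (A * (r ^ n - ρ ^ n)) + (1/ρ - 1/r) * (B * (ρ ^ (-α) - r ^ (-α))) := by
      ring
    rw [this]
    have : A * K ^ n / ρ = (1/ρ) * (A * K ^ n) := by ring
    rw [this]
    have : B * ((1/ρ - 1/K) * (ρ ^ (-α) - K ^ (-α)))
        = (1/ρ - 1/K) * (B * (ρ ^ (-α) - K ^ (-α))) := by ring
    rw [this]
    linarith
  have h1 : 0 ≤ A * K ^ n / ρ := by positivity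
  have hc2 : 0 ≤ (1/ρ - 1/K) * (ρ ^ (-α) - K ^ (-α)) := by
    apply mul_nonneg (by linarith) (by linarith)
  calc Real.sqrt (((r - ρ) / (r * ρ)) * (A * (r ^ n - ρ ^ n) - B * (r ^ (-α) - ρ ^ (-α))))
      ≤ Real.sqrt (A * K ^ n / ρ + B * ((1/ρ - 1/K) * (ρ ^ (-α) - K ^ (-α)))) :=
        Real.sqrt_le_sqrt hinner
    _ ≤ Real.sqrt (A * K ^ n / ρ) + Real.sqrt (B * ((1/ρ - 1/K) * (ρ ^ (-α) - K ^ (-α)))) :=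
        sqrt_add_le' _ _ h1 (by positivity)
    _ = Real.sqrt (A * K ^ n / ρ) +
        Real.sqrt B * Real.sqrt ((1/ρ - 1/K) * (ρ ^ (-α) - K ^ (-α))) := by
        rw [Real.sqrt_mul hB.le]

set_option maxHeartbeats 1000000 in
/-- Suppose `uL − uR > √B ρR^{−(α+1)/2} + √B ρL^{−(α+1)/2}` with `B > 0` fixed,
`ρL, ρR > 0`, `0 < α ≤ 1`, and for each `A > 0` there is `ρstar A > max ρL ρR`
satisfying the two-shock matching equation. Then `ρstar A → +∞` as `A → 0⁺`. -/
theorem stmt_15 (n α B ρL ρR uL uR : ℝ)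
    (hn1 : 1 ≤ n) (hn3 : n ≤ 3) (hα0 : 0 < α) (hα1 : α ≤ 1)
    (hB : 0 < B) (hρL : 0 < ρL) (hρR : 0 < ρR)
    (hu : Real.sqrt B * ρR ^ (-(α + 1) / 2) + Real.sqrt B * ρL ^ (-(α + 1) / 2) <
      uL - uR)
    (ρstar : ℝ → ℝ)
    (hbig : ∀ A : ℝ, 0 < A → max ρL ρR < ρstar A)
    (heq : ∀ A : ℝ, 0 < A →
      uL - uR =
        Real.sqrt (((ρstar A - ρL) / (ρstar A * ρL)) *
          (A * ((ρstar A) ^ n - ρL ^ n) - B * ((ρstar A) ^ (-α) - ρL ^ (-α)))) +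
        Real.sqrt (((ρstar A - ρR) / (ρstar A * ρR)) *
          (A * ((ρstar A) ^ n - ρR ^ n) - B * ((ρstar A) ^ (-α) - ρR ^ (-α))))) :
    ∀ M : ℝ, ∃ δ > 0, ∀ A : ℝ, 0 < A → A < δ → M < ρstar A := by
  intro M
  set K : ℝ := max M (max ρL ρR) + 1 with hKdef
  have hMK : M < K := by
    have : M ≤ max M (max ρL ρR) := le_max_left _ _
    linarith
  have hLK : ρL < K := by
    have : ρL ≤ max M (max ρL ρR) := le_trans (le_max_left _ _) (le_max_right _ _)
    linarith
  have hRK : ρR < K := by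
    have : ρR ≤ max M (max ρL ρR) := le_trans (le_max_right _ _) (le_max_right _ _)
    linarith
  have hK0 : (0:ℝ) < K := hρL.trans hLK
  set cL : ℝ := Real.sqrt ((1/ρL - 1/K) * (ρL ^ (-α) - K ^ (-α))) with hcLdef
  set cR : ℝ := Real.sqrt ((1/ρR - 1/K) * (ρR ^ (-α) - K ^ (-α))) with hcRdef
  have hsB : 0 < Real.sqrt B := Real.sqrt_pos.mpr hB
  have hcL : Real.sqrt B * cL < Real.sqrt B * ρL ^ (-(α + 1) / 2) :=
    mul_lt_mul_of_pos_left (cbound' α ρL K hα0 hρL hLK) hsB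
  have hcR : Real.sqrt B * cR < Real.sqrt B * ρR ^ (-(α + 1) / 2) :=
    mul_lt_mul_of_pos_left (cbound' α ρR K hα0 hρR hRK) hsB
  set ε : ℝ := (uL - uR) - (Real.sqrt B * cL + Real.sqrt B * cR) with hεdef
  have hε : 0 < ε := by simp only [hεdef]; linarith
  set C : ℝ := K ^ n / ρL + K ^ n / ρR with hCdef
  have hKn : 0 < K ^ n := Real.rpow_pos_of_pos hK0 n
  have hC : 0 < C := by positivity
  refine ⟨ε ^ 2 / (4 * C), by positivity, fun A hA hAδ => ?_⟩
  by_contra hcon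
  push_neg at hcon
  have hr1 : max ρL ρR < ρstar A := hbig A hA
  have hrL : ρL < ρstar A := lt_of_le_of_lt (le_max_left _ _) hr1
  have hrR : ρR < ρstar A := lt_of_le_of_lt (le_max_right _ _) hr1
  have hrK : ρstar A < K := lt_of_le_of_lt hcon hMK
  have hn0 : (0:ℝ) < n := lt_of_lt_of_le one_pos hn1
  have hTL := term_bound' A B α n ρL (ρstar A) K hA hB hα0 hn0 hρL hrL hrK
  have hTR := term_bound' A B α n ρR (ρstar A) K hA hB hα0 hn0 hρR hrR hrK
  have hAC : Real.sqrt (A * C) < ε / 2 := by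
    rw [Real.sqrt_lt' (by positivity)]
    have h1 : A * C < (ε ^ 2 / (4 * C)) * C := by
      exact mul_lt_mul_of_pos_right hAδ hC
    have h2 : (ε ^ 2 / (4 * C)) * C = ε ^ 2 / 4 := by field_simp
    have h3 : (ε / 2) ^ 2 = ε ^ 2 / 4 := by ring
    linarith
  have hsL : Real.sqrt (A * K ^ n / ρL) ≤ Real.sqrt (A * C) := by
    apply Real.sqrt_le_sqrt
    have h : K ^ n / ρL ≤ C := by
      have : 0 < K ^ n / ρR := by positivity
      simp only [hCdef]; linarith
    rw [mul_div_assoc]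
    exact mul_le_mul_of_nonneg_left h hA.le
  have hsR : Real.sqrt (A * K ^ n / ρR) ≤ Real.sqrt (A * C) := by
    apply Real.sqrt_le_sqrt
    have h : K ^ n / ρR ≤ C := by
      have : 0 < K ^ n / ρL := by positivity
      simp only [hCdef]; linarith
    rw [mul_div_assoc]
    exact mul_le_mul_of_nonneg_left h hA.le
  have hE := heq A hA
  linarith
end

section
/- The functions x(t) = σ₀^B t + βt²/2, u_δ(t) = σ₀^B + βt, w(t) = w₀^B t solve the generalized Rankine–Hugoniot system dx/dt = u_δ(t), dw/dt = u_δ(t)(ρ₊−ρ₋) − (ρ₊(u₊+βt) − ρ₋(u₋+βt)), d(w u_δ)/dt = u_δ(t)(ρ₊(u₊+βt) − ρ₋(u₋+βt)) − (ρ₊(u₊+βt)² − B/ρ₊^α − ρ₋(u₋+βt)² + B/ρ₋^α) + βw(t), with x(0)=0, w(0)=0, provided ρ₊ ≠ ρ₋, w₀^B = √(ρ₊ρ₋((u₊−u₋)² − (1/ρ₊−1/ρ₋)(B/ρ₊^α − B/ρ₋^α))) is real, and σ₀^B = (ρ₊u₊ − ρ₋u₋ + w₀^B)/(ρ₊−ρ₋).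 -/
/-- The functions `x(t) = σ₀B t + βt²/2`, `u_δ(t) = σ₀B + βt`, `w(t) = w₀B t`
solve the generalized Rankine–Hugoniot system for the delta shock of the
generalized Chaplygin gas with Coulomb-like friction, with `x(0)=0, w(0)=0`,
provided `ρR ≠ ρL`, `w₀B = √(ρR ρL((uR−uL)² − (1/ρR−1/ρL)(B/ρR^α − B/ρL^α)))`
is real, and `σ₀B = (ρR uR − ρL uL + w₀B)/(ρR − ρL)`. -/
theorem stmt_19 (α B β ρL ρR uL uR w₀B σ₀B : ℝ)
    (hα0 : 0 < α) (hα1 : α ≤ 1) (hB : 0 < B)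
    (hρL : 0 < ρL) (hρR : 0 < ρR) (hne : ρR ≠ ρL)
    (hnonneg : 0 ≤ (uR - uL) ^ 2 - (1 / ρR - 1 / ρL) * (B / ρR ^ α - B / ρL ^ α))
    (hw₀ : w₀B = Real.sqrt (ρR * ρL * ((uR - uL) ^ 2 -
      (1 / ρR - 1 / ρL) * (B / ρR ^ α - B / ρL ^ α))))
    (hσ : σ₀B = (ρR * uR - ρL * uL + w₀B) / (ρR - ρL))
    (x uδ w : ℝ → ℝ)
    (hx : ∀ t, x t = σ₀B * t + β * t ^ 2 / 2)
    (huδ : ∀ t, uδ t = σ₀B + β * t)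
    (hw : ∀ t, w t = w₀B * t) :
    x 0 = 0 ∧ w 0 = 0 ∧
    (∀ t : ℝ,
      HasDerivAt x (uδ t) t ∧
      HasDerivAt w (uδ t * (ρR - ρL) - (ρR * (uR + β * t) - ρL * (uL + β * t))) t ∧
      HasDerivAt (fun s => w s * uδ s)
        (uδ t * (ρR * (uR + β * t) - ρL * (uL + β * t)) -
          (ρR * (uR + β * t) ^ 2 - B / ρR ^ α - ρL * (uL + β * t) ^ 2 + B / ρL ^ α) +
          β * w t) t) := by
  have hd : ρR - ρL ≠ 0 := sub_ne_zero_of_ne hne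
  have hsq : w₀B ^ 2 = ρR * ρL * ((uR - uL) ^ 2 -
      (1 / ρR - 1 / ρL) * (B / ρR ^ α - B / ρL ^ α)) := by
    rw [hw₀]
    exact Real.sq_sqrt (mul_nonneg (mul_nonneg hρR.le hρL.le) hnonneg)
  have hsq' : w₀B ^ 2 = ρR * ρL * (uR - uL) ^ 2 +
      (ρR - ρL) * (B / ρR ^ α - B / ρL ^ α) := by
    rw [hsq]
    field_simp
    ring
  have hS : σ₀B * (ρR - ρL) = ρR * uR - ρL * uL + w₀B := by
    rw [hσ]; field_simp
  have hxf : x = fun t => σ₀B * t + β * t ^ 2 / 2 := funext hx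
  have huf : uδ = fun t => σ₀B + β * t := funext huδ
  have hwf : w = fun t => w₀B * t := funext hw
  subst hxf huf hwf
  refine ⟨by norm_num, by norm_num, fun t => ⟨?_, ?_, ?_⟩⟩
  · have h1 : HasDerivAt (fun t : ℝ => σ₀B * t + β * t ^ 2 / 2) (σ₀B + β * t) t := by
      have := ((hasDerivAt_id t).const_mul σ₀B).add
        (((hasDerivAt_pow 2 t).const_mul β).div_const 2)
      exact this.congr_deriv (by simp; ring)
    exact h1
  · have h2 : HasDerivAt (fun t : ℝ => w₀B * t) w₀B t := by
      simpa using (hasDerivAt_id t).const_mul w₀B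
    convert h2 using 1
    linear_combination hS
  · have h3 : HasDerivAt (fun s : ℝ => w₀B * s * (σ₀B + β * s))
        (w₀B * (σ₀B + β * t) + w₀B * t * β) t := by
      have := ((hasDerivAt_id t).const_mul w₀B).mul
        ((hasDerivAt_const t σ₀B).add ((hasDerivAt_id t).const_mul β))
      exact this.congr_deriv (by simp)
    convert h3 using 1
    apply mul_left_cancel₀ hd
    linear_combination (ρR * uR - ρL * uL + (ρR - ρL) * β * t - w₀B) * hS - hsq'
end
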